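/- Let g(n) = (ρ^n/n!) / (Σ_{j=0}^{n} ρ^j/j!) be the Erlang-B blocking formula with offered load ρ > 0. Then g is strictly decreasing in n: for all natural numbers n, g(n+1) < g(n). -/
import Mathlib


/-- The Erlang-B blocking probability g(n) = (ρ^n/n!)/(Σ_{j≤n} ρ^j/j!) is strictly
    decreasing in the number of circuits n. -/
theorem stmt3 (ρ : ℝ) (hρ : 0 < ρ)
    (g : ℕ → ℝ)
    (hg : ∀ n : ℕ, g n = (ρ ^ n / (Nat.factorial n : ℝ)) /
      (∑ j ∈ Finset.range (n + 1), ρ ^ j / (Nat.factorial j : ℝ))) :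
    ∀ n : ℕ, g (n + 1) < g n := by
  intro n
  have hterm : ∀ j : ℕ, 0 < ρ ^ j / (Nat.factorial j : ℝ) := fun j =>
    div_pos (pow_pos hρ j) (by exact_mod_cast Nat.factorial_pos j)
  have hS : ∀ m : ℕ, 0 < ∑ j ∈ Finset.range (m + 1), ρ ^ j / (Nat.factorial j : ℝ) :=
    fun m => Finset.sum_pos (fun j _ => hterm j) (by simp)
  rw [hg, hg, div_lt_div_iff₀ (hS (n + 1)) (hS n)]
  rw [Finset.mul_sum, Finset.mul_sum]
  -- split RHS sum at j = 0
  rw [Finset.sum_range_succ' (fun j => ρ ^ n / (Nat.factorial n : ℝ) * (ρ ^ j / (Nat.factorial j : ℝ))) (n + 1)]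
  have hlast : 0 < ρ ^ n / (Nat.factorial n : ℝ) * (ρ ^ 0 / (Nat.factorial 0 : ℝ)) := by
    exact mul_pos (hterm n) (hterm 0)
  have hmain : ∑ j ∈ Finset.range (n + 1),
      ρ ^ (n + 1) / (Nat.factorial (n + 1) : ℝ) * (ρ ^ j / (Nat.factorial j : ℝ)) ≤
      ∑ j ∈ Finset.range (n + 1),
      ρ ^ n / (Nat.factorial n : ℝ) * (ρ ^ (j + 1) / (Nat.factorial (j + 1) : ℝ)) := by
    apply Finset.sum_le_sum
    intro j hj
    have hjn : j + 1 ≤ n + 1 := Nat.succ_le_succ (Nat.lt_succ_iff.mp (Finset.mem_range.mp hj))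
    have hfac : ((j + 1).factorial : ℝ) * (n.factorial : ℝ) ≤
        ((n + 1).factorial : ℝ) * (j.factorial : ℝ) := by
      rw [Nat.factorial_succ, Nat.factorial_succ]
      push_cast
      have h1 : (0:ℝ) < (n.factorial : ℝ) := by exact_mod_cast Nat.factorial_pos n
      have h2 : (0:ℝ) < (j.factorial : ℝ) := by exact_mod_cast Nat.factorial_pos j
      have : ((j:ℝ) + 1) * ((j.factorial : ℝ) * (n.factorial : ℝ)) ≤
          ((n:ℝ) + 1) * ((j.factorial : ℝ) * (n.factorial : ℝ)) := by
        apply mul_le_mul_of_nonneg_right _ (le_of_lt (mul_pos h2 h1))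
        exact_mod_cast hjn
      nlinarith [this]
    have hpow : ρ ^ (n + 1) * ρ ^ j = ρ ^ n * ρ ^ (j + 1) := by ring
    rw [div_mul_div_comm, div_mul_div_comm, hpow]
    apply div_le_div_of_nonneg_left _ _ _
    · positivity
    · positivity
    · linarith [hfac, mul_comm ((j + 1).factorial : ℝ) (n.factorial : ℝ)]
  linarith [hmain, hlast]
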